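/- arXiv:1704.08972 — 3 statements merged into one kernel-verified Lean document; each statement's English description precedes it below -/
import Mathlib

section
/- Let M ≥ 1, let κ ∈ ℝ^M, and let Δ be an M×M real symmetric matrix with zero diagonal. Define the multivariate Von Mises log-density exponent (with μ = 0) as f(θ) = Σ_i κ_i cos(θ_i) − Σ_{i,k} Δ_{ik} (sin θ_i sin θ_k + cos θ_i cos θ_k) for θ ∈ ℝ^M. Define the real symmetric matrix G by G_{ik} = Δ_{ik} for k ≠ i and G_{ii} = κ_i/2 − Σ_{l≠i} Δ_{il}. Then for every θ ∈ ℝ^M, with φ_i = exp(j θ_i), one has (φ − 1_M)^H G (φ − 1_M) + f(θ) = trace(G) + Σ_{i,k} G_{ik}; in particular the quadratic form equals −f(θ) plus a constant independent of θ. -/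
/-!
Write `φ - 1 = (c - 1) + i s` with `c = cos θ`, `s = sin θ`. Since `G` is real symmetric, the
Hermitian form splits as `(c - 1)ᵀ G (c - 1) + sᵀ G s`. Because `G` differs from `Δ` only on
the diagonal and `cᵢ² + sᵢ² = 1`, we get `cᵀ G c + sᵀ G s = cᵀ Δ c + sᵀ Δ s + trace G`; because
the rows of `G` sum to `κ / 2`, the cross term `2 cᵀ G 1` is `κᵀ c`. Both θ-dependent parts
cancel against `f θ`, leaving `trace G + 1ᵀ G 1`.
-/

open Matrix Complex Finset

namespace Matrix

theorem eq_add_diagonal_diag {n R : Type*} [DecidableEq n] [AddZeroClass R]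
    {G Δ : Matrix n n R} (hΔd : ∀ i, Δ i i = 0) (hoff : ∀ i k, k ≠ i → G i k = Δ i k) :
    G = Δ + diagonal G.diag := by
  ext i k
  rcases eq_or_ne k i with rfl | hki
  · simp [hΔd]
  · simp [hoff i k hki, diagonal_apply_ne _ hki.symm]

variable {n : Type*} [Fintype n]

theorem IsSymm.dotProduct_mulVec_comm {R : Type*} [CommSemiring R] {A : Matrix n n R}
    (hA : A.IsSymm) (x y : n → R) : x ⬝ᵥ A *ᵥ y = y ⬝ᵥ A *ᵥ x := by
  rw [dotProduct_mulVec, ← mulVec_transpose, hA.eq, dotProduct_comm]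

theorem IsSymm.sub_dotProduct_mulVec_sub {R : Type*} [CommRing R] {A : Matrix n n R}
    (hA : A.IsSymm) (x y : n → R) :
    (x - y) ⬝ᵥ A *ᵥ (x - y) = x ⬝ᵥ A *ᵥ x - 2 * (x ⬝ᵥ A *ᵥ y) + y ⬝ᵥ A *ᵥ y := by
  rw [mulVec_sub, dotProduct_sub, sub_dotProduct, sub_dotProduct, hA.dotProduct_mulVec_comm y x]
  ring

theorem ofReal_dotProduct_mulVec (A : Matrix n n ℝ) (x y : n → ℝ) :
    ((x ⬝ᵥ A *ᵥ y : ℝ) : ℂ) = (ofReal ∘ x) ⬝ᵥ A.map ofReal *ᵥ (ofReal ∘ y) := by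
  rw [← ofRealHom_eq_coe, RingHom.map_dotProduct]
  congr 1
  ext i
  exact RingHom.map_mulVec _ A y i

theorem IsSymm.star_dotProduct_map_ofReal_mulVec {A : Matrix n n ℝ} (hA : A.IsSymm)
    (x y : n → ℝ) :
    star (ofReal ∘ x + I • ofReal ∘ y) ⬝ᵥ A.map ofReal *ᵥ (ofReal ∘ x + I • ofReal ∘ y) =
      ((x ⬝ᵥ A *ᵥ x + y ⬝ᵥ A *ᵥ y : ℝ) : ℂ) := by
  have hstar (v : n → ℝ) : star (ofReal ∘ v) = ofReal ∘ v := by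
    ext i
    simp
  rw [star_add, star_smul, hstar, hstar, mulVec_add, mulVec_smul, add_dotProduct,
    dotProduct_add, dotProduct_add, smul_dotProduct, smul_dotProduct, dotProduct_smul,
    dotProduct_smul, (hA.map ofReal).dotProduct_mulVec_comm (ofReal ∘ y), ofReal_add,
    ofReal_dotProduct_mulVec, ofReal_dotProduct_mulVec]
  simp only [smul_eq_mul, star_def, conj_I]
  linear_combination (-(ofReal ∘ y ⬝ᵥ A.map ofReal *ᵥ (ofReal ∘ y))) * I_sq

theorem sum_sum_mul_add_mul_eq_dotProduct_mulVec_add {R : Type*} [CommSemiring R]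
    (A : Matrix n n R) (x y : n → R) :
    ∑ i, ∑ k, A i k * (x i * x k + y i * y k) = x ⬝ᵥ A *ᵥ x + y ⬝ᵥ A *ᵥ y := by
  simp only [dotProduct, mulVec, mul_sum, ← sum_add_distrib]
  exact sum_congr rfl fun i _ => sum_congr rfl fun k _ => by ring

theorem dotProduct_add_diagonal_mulVec_add {R : Type*} [CommRing R] [DecidableEq n]
    (A : Matrix n n R) (d x y : n → R) (hxy : ∀ i, x i ^ 2 + y i ^ 2 = 1) :
    x ⬝ᵥ (A + diagonal d) *ᵥ x + y ⬝ᵥ (A + diagonal d) *ᵥ y =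
      x ⬝ᵥ A *ᵥ x + y ⬝ᵥ A *ᵥ y + ∑ i, d i := by
  have hdiag : x ⬝ᵥ diagonal d *ᵥ x + y ⬝ᵥ diagonal d *ᵥ y = ∑ i, d i := by
    simp only [dotProduct, mulVec_diagonal, ← sum_add_distrib]
    exact sum_congr rfl fun i _ => by linear_combination d i * hxy i
  rw [add_mulVec, add_mulVec, dotProduct_add, dotProduct_add, ← hdiag]
  ring

theorem mulVec_one_of_diag_eq_sub_sum {R : Type*} [CommRing R] [DecidableEq n]
    {G Δ : Matrix n n R} {a : n → R} (hoff : ∀ i k, k ≠ i → G i k = Δ i k)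
    (hdiag : ∀ i, G i i = a i - ∑ l ∈ univ.erase i, Δ i l) :
    G *ᵥ 1 = a := by
  ext i
  have hrow : ∑ k ∈ univ.erase i, G i k = ∑ k ∈ univ.erase i, Δ i k :=
    sum_congr rfl fun k hk => hoff i k (ne_of_mem_erase hk)
  simp only [mulVec, dotProduct, Pi.one_apply, mul_one]
  rw [← add_sum_erase _ _ (mem_univ i), hrow, hdiag, sub_add_cancel]

end Matrix

theorem vonMises_mahalanobis_identity_general (M : ℕ)
    (κ : Fin M → ℝ) (Δ : Matrix (Fin M) (Fin M) ℝ)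
    (hΔ : Δ.IsSymm) (hΔd : ∀ i, Δ i i = 0)
    (f : (Fin M → ℝ) → ℝ)
    (hf : ∀ θ : Fin M → ℝ, f θ = ∑ i, κ i * Real.cos (θ i)
      - ∑ i, ∑ k, Δ i k *
          (Real.sin (θ i) * Real.sin (θ k) + Real.cos (θ i) * Real.cos (θ k)))
    (G : Matrix (Fin M) (Fin M) ℝ)
    (hG : ∀ i k, G i k =
      if k = i then κ i / 2 - ∑ l ∈ Finset.univ.erase i, Δ i l else Δ i k)
    (θ : Fin M → ℝ) (φ : Fin M → ℂ)
    (hφ : ∀ i, φ i = Complex.exp (Complex.I * (θ i : ℂ))) :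
    star (φ - 1) ⬝ᵥ ((G.map Complex.ofReal) *ᵥ (φ - 1)) + (f θ : ℂ) =
      ((G.trace + ∑ i, ∑ k, G i k : ℝ) : ℂ) := by
  set c := Real.cos ∘ θ
  set s := Real.sin ∘ θ
  have hφ1 : φ - 1 = ofReal ∘ (c - 1) + I • ofReal ∘ s := by
    ext i
    simp only [Pi.sub_apply, Pi.one_apply, Pi.add_apply, Pi.smul_apply, Function.comp_apply,
      smul_eq_mul, hφ, mul_comm I, exp_mul_I, ofReal_sub, ofReal_one, ofReal_cos, ofReal_sin, c, s]
    ring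
  have hoff : ∀ i k, k ≠ i → G i k = Δ i k := fun i k hki => by rw [hG, if_neg hki]
  have hGΔ : G = Δ + diagonal G.diag := eq_add_diagonal_diag hΔd hoff
  have hG_symm : G.IsSymm := by
    rw [hGΔ]
    exact hΔ.add (isSymm_diagonal _)
  have hf' : f θ = κ ⬝ᵥ c - (s ⬝ᵥ Δ *ᵥ s + c ⬝ᵥ Δ *ᵥ c) := by
    rw [hf, ← sum_sum_mul_add_mul_eq_dotProduct_mulVec_add]
    rfl
  have hcircle : c ⬝ᵥ G *ᵥ c + s ⬝ᵥ G *ᵥ s = c ⬝ᵥ Δ *ᵥ c + s ⬝ᵥ Δ *ᵥ s + G.trace := by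
    conv_lhs => rw [hGΔ]
    exact dotProduct_add_diagonal_mulVec_add Δ G.diag c s fun i => Real.cos_sq_add_sin_sq (θ i)
  have hlin : c ⬝ᵥ G *ᵥ 1 = 2⁻¹ * (κ ⬝ᵥ c) := by
    rw [mulVec_one_of_diag_eq_sub_sum hoff fun i => by rw [hG, if_pos rfl], dotProduct,
      dotProduct, mul_sum]
    exact sum_congr rfl fun i _ => by ring
  have hconst : 1 ⬝ᵥ G *ᵥ 1 = ∑ i, ∑ k, G i k := by
    simp [dotProduct, mulVec]
  rw [hφ1, hG_symm.star_dotProduct_map_ofReal_mulVec, hf', ← ofReal_add, ofReal_inj,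
    hG_symm.sub_dotProduct_mulVec_sub, hlin, hconst]
  linear_combination hcircle

/-- Quantitative content of Lemma 1 with eq. (7): for the multivariate Von Mises
log-density exponent `f` (mean `μ = 0`) and the matrix `G = Γ_φ⁻¹` built from
`κ` and `Δ`, one has `(φ − 1)ᴴ G (φ − 1) + f(θ) = trace G + Σ_{i,k} G_{ik}`,
a constant independent of `θ`. -/
theorem vonMises_mahalanobis_identity (M : ℕ) (hM : 1 ≤ M)
    (κ : Fin M → ℝ) (Δ : Matrix (Fin M) (Fin M) ℝ)
    (hΔ : Δ.IsSymm) (hΔd : ∀ i, Δ i i = 0)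
    (f : (Fin M → ℝ) → ℝ)
    (hf : ∀ θ : Fin M → ℝ, f θ = ∑ i, κ i * Real.cos (θ i)
      - ∑ i, ∑ k, Δ i k *
          (Real.sin (θ i) * Real.sin (θ k) + Real.cos (θ i) * Real.cos (θ k)))
    (G : Matrix (Fin M) (Fin M) ℝ)
    (hG : ∀ i k, G i k =
      if k = i then κ i / 2 - ∑ l ∈ Finset.univ.erase i, Δ i l else Δ i k)
    (θ : Fin M → ℝ) (φ : Fin M → ℂ)
    (hφ : ∀ i, φ i = Complex.exp (Complex.I * (θ i : ℂ))) :
    star (φ - 1) ⬝ᵥ ((G.map Complex.ofReal) *ᵥ (φ - 1)) + (f θ : ℂ) =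
      ((G.trace + ∑ i, ∑ k, G i k : ℝ) : ℂ) :=
  vonMises_mahalanobis_identity_general M κ Δ hΔ hΔd f hf G hG θ φ hφ
end

section
/- Let M ≥ 1, let κ ∈ ℝ^M, let Δ be an M×M real symmetric matrix with zero diagonal, and define f(θ) = Σ_i κ_i cos(θ_i) − Σ_{i,k} Δ_{ik} (sin θ_i sin θ_k + cos θ_i cos θ_k) and the real symmetric matrix G by G_{ik} = Δ_{ik} for k ≠ i and G_{ii} = κ_i/2 − Σ_{l≠i} Δ_{il}. Then for θ̂ ∈ ℝ^M with φ̂_i = exp(j θ̂_i), the following are equivalent: (i) f(θ̂) ≥ f(θ) for all θ ∈ ℝ^M; (ii) (φ̂ − 1_M)^H G (φ̂ − 1_M) ≤ (φ − 1_M)^H G (φ − 1_M) for every φ ∈ ℂ^M with |φ_i| = 1 for all i. -/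
/-!
Writing `φ = exp(jθ)`, the real part of `(φ − 1)ᴴ G (φ − 1)` is a trigonometric polynomial in `θ`,
and the choice of `G` (off-diagonal part `Δ`, diagonal `κ/2` minus the row sums of `Δ`) makes it
equal to the constant `Σᵢ (κᵢ − Σₗ Δᵢₗ)` minus `f(θ)`. Since every unit-modulus vector is of the
form `exp(jθ)`, maximizing `f` and minimizing the quadratic form are the same problem.
-/

open Matrix Complex Finset ComplexConjugate

theorem conj_exp_I_mul_sub_one_mul_re (a b : ℝ) :
    (conj (exp (I * a) - 1) * (exp (I * b) - 1)).re
      = Real.cos (b - a) - Real.cos a - Real.cos b + 1 := by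
  rw [mul_comm I, mul_comm I, exp_mul_I, exp_mul_I, ← ofReal_cos, ← ofReal_sin, ← ofReal_cos,
    ← ofReal_sin, Real.cos_sub]
  simp only [mul_re, sub_re, sub_im, add_re, add_im, conj_re, conj_im, ofReal_re, ofReal_im,
    mul_im, I_re, I_im, one_re, one_im]
  ring

theorem exists_eq_exp_I_mul_of_norm_eq_one {ι : Type*} {φ : ι → ℂ} (hφ : ∀ i, ‖φ i‖ = 1) :
    ∃ θ : ι → ℝ, φ = fun i => exp (I * θ i) := by
  refine ⟨fun i => arg (φ i), funext fun i => ?_⟩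
  conv_lhs => rw [← norm_mul_exp_arg_mul_I (φ i), hφ i, ofReal_one, one_mul, mul_comm]

section

variable {ι : Type*} [Fintype ι]

theorem re_star_dotProduct_map_ofReal_mulVec (G : Matrix ι ι ℝ) (v : ι → ℂ) :
    (star v ⬝ᵥ (G.map ofReal *ᵥ v)).re = ∑ i, ∑ k, G i k * (conj (v i) * v k).re := by
  simp only [dotProduct, mulVec, re_sum, mul_sum]
  refine sum_congr rfl fun i _ => sum_congr rfl fun k _ => ?_
  simp only [Pi.star_apply, RCLike.star_def, map_apply]
  rw [mul_left_comm, re_ofReal_mul]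

theorem sum_sum_add_diagonal_mul [DecidableEq ι] (A : Matrix ι ι ℝ) (d : ι → ℝ)
    (x : ι → ι → ℝ) :
    ∑ i, ∑ k, (A + diagonal d) i k * x i k = ∑ i, ∑ k, A i k * x i k + ∑ i, d i * x i i := by
  simp only [Matrix.add_apply, add_mul, sum_add_distrib, diagonal_apply, ite_mul, zero_mul,
    sum_ite_eq, mem_univ, if_true]

theorem sum_sum_mul_of_isSymm {A : Matrix ι ι ℝ} (hA : A.IsSymm) (c : ι → ℝ) :
    ∑ i, ∑ k, A i k * c k = ∑ i, (∑ l, A i l) * c i := by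
  rw [sum_comm]
  refine sum_congr rfl fun k _ => ?_
  rw [sum_mul]
  exact sum_congr rfl fun i _ => by rw [hA.apply]

theorem sum_sum_mul_cos_sub_sub_cos_sub_cos_add_one {Δ : Matrix ι ι ℝ} (hΔ : Δ.IsSymm)
    (θ : ι → ℝ) :
    ∑ i, ∑ k, Δ i k * (Real.cos (θ k - θ i) - Real.cos (θ i) - Real.cos (θ k) + 1)
      = ∑ i, ∑ k, Δ i k * (Real.sin (θ i) * Real.sin (θ k) + Real.cos (θ i) * Real.cos (θ k))
        - 2 * ∑ i, (∑ l, Δ i l) * Real.cos (θ i) + ∑ i, ∑ l, Δ i l := by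
  have hterm : ∀ i k, Δ i k * (Real.cos (θ k - θ i) - Real.cos (θ i) - Real.cos (θ k) + 1)
      = Δ i k * (Real.sin (θ i) * Real.sin (θ k) + Real.cos (θ i) * Real.cos (θ k))
        - Δ i k * Real.cos (θ i) - Δ i k * Real.cos (θ k) + Δ i k := by
    intro i k; rw [Real.cos_sub]; ring
  simp only [hterm, sum_add_distrib, sum_sub_distrib, sum_sum_mul_of_isSymm hΔ, ← sum_mul]
  ring

noncomputable def vonMisesExponent (κ : ι → ℝ) (Δ : Matrix ι ι ℝ) (θ : ι → ℝ) : ℝ :=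
  ∑ i, κ i * Real.cos (θ i)
    - ∑ i, ∑ k, Δ i k * (Real.sin (θ i) * Real.sin (θ k) + Real.cos (θ i) * Real.cos (θ k))

/-- The matrix `G = Γ_φ⁻¹` of the paper. -/
noncomputable def vonMisesPrecision [DecidableEq ι] (κ : ι → ℝ) (Δ : Matrix ι ι ℝ) :
    Matrix ι ι ℝ :=
  Δ + diagonal fun i => κ i / 2 - ∑ l, Δ i l

theorem eq_vonMisesPrecision [DecidableEq ι] {κ : ι → ℝ} {Δ : Matrix ι ι ℝ}
    (hΔd : ∀ i, Δ i i = 0) {G : Matrix ι ι ℝ}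
    (hG : ∀ i k, G i k = if k = i then κ i / 2 - ∑ l ∈ univ.erase i, Δ i l else Δ i k) :
    G = vonMisesPrecision κ Δ := by
  ext i k
  rcases eq_or_ne k i with rfl | hki
  · simp [vonMisesPrecision, hG, hΔd]
  · simp [vonMisesPrecision, hG, hki, hki.symm]

theorem re_mahalanobis_vonMisesPrecision [DecidableEq ι] (κ : ι → ℝ) {Δ : Matrix ι ι ℝ}
    (hΔ : Δ.IsSymm) (θ : ι → ℝ) :
    (star ((fun i => exp (I * θ i)) - 1) ⬝ᵥ
        ((vonMisesPrecision κ Δ).map ofReal *ᵥ ((fun i => exp (I * θ i)) - 1))).re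
      = ∑ i, (κ i - ∑ l, Δ i l) - vonMisesExponent κ Δ θ := by
  rw [re_star_dotProduct_map_ofReal_mulVec, vonMisesPrecision, sum_sum_add_diagonal_mul]
  simp only [Pi.sub_apply, Pi.one_apply, conj_exp_I_mul_sub_one_mul_re, sub_self, Real.cos_zero]
  rw [sum_sum_mul_cos_sub_sub_cos_sub_cos_add_one hΔ, vonMisesExponent]
  have hdiag : ∀ x y c : ℝ, (x / 2 - y) * (1 - c - c + 1) = x - x * c - 2 * y + 2 * (y * c) :=
    fun _ _ _ => by ring
  simp only [hdiag, sum_add_distrib, sum_sub_distrib, ← mul_sum]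
  ring

end

theorem vonMises_MAP_iff_mahalanobis_min_general (M : ℕ)
    (κ : Fin M → ℝ) (Δ : Matrix (Fin M) (Fin M) ℝ)
    (hΔ : Δ.IsSymm) (hΔd : ∀ i, Δ i i = 0)
    (f : (Fin M → ℝ) → ℝ)
    (hf : ∀ θ : Fin M → ℝ, f θ = ∑ i, κ i * Real.cos (θ i)
      - ∑ i, ∑ k, Δ i k *
          (Real.sin (θ i) * Real.sin (θ k) + Real.cos (θ i) * Real.cos (θ k)))
    (G : Matrix (Fin M) (Fin M) ℝ)
    (hG : ∀ i k, G i k =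
      if k = i then κ i / 2 - ∑ l ∈ Finset.univ.erase i, Δ i l else Δ i k)
    (θhat : Fin M → ℝ) (φhat : Fin M → ℂ)
    (hφhat : ∀ i, φhat i = Complex.exp (Complex.I * (θhat i : ℂ))) :
    (∀ θ : Fin M → ℝ, f θ ≤ f θhat) ↔
      (∀ φ : Fin M → ℂ, (∀ i, ‖φ i‖ = 1) →
        (star (φhat - 1) ⬝ᵥ ((G.map Complex.ofReal) *ᵥ (φhat - 1))).re ≤
          (star (φ - 1) ⬝ᵥ ((G.map Complex.ofReal) *ᵥ (φ - 1))).re) := by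
  obtain rfl := eq_vonMisesPrecision hΔd hG
  obtain rfl : φhat = fun i => exp (I * θhat i) := funext hφhat
  obtain rfl : f = vonMisesExponent κ Δ := funext hf
  rw [re_mahalanobis_vonMisesPrecision κ hΔ]
  constructor
  · rintro hmax φ hφ
    obtain ⟨θ, rfl⟩ := exists_eq_exp_I_mul_of_norm_eq_one hφ
    simpa only [re_mahalanobis_vonMisesPrecision κ hΔ, sub_le_sub_iff_left] using hmax θ
  · intro hmin θ
    simpa only [re_mahalanobis_vonMisesPrecision κ hΔ, sub_le_sub_iff_left]
      using hmin _ fun i => norm_exp_I_mul_ofReal (θ i)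

/-- Lemma 1 of the paper: `θ̂` maximizes the multivariate Von Mises log-density
exponent `f` if and only if `φ̂ = exp(j θ̂)` minimizes the Mahalanobis-type
quadratic form `(φ − 1)ᴴ G (φ − 1)` over unit-modulus vectors `φ`, where
`G = Γ_φ⁻¹` is built from `κ` and `Δ` via eq. (7). -/
theorem vonMises_MAP_iff_mahalanobis_min (M : ℕ) (hM : 1 ≤ M)
    (κ : Fin M → ℝ) (Δ : Matrix (Fin M) (Fin M) ℝ)
    (hΔ : Δ.IsSymm) (hΔd : ∀ i, Δ i i = 0)
    (f : (Fin M → ℝ) → ℝ)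
    (hf : ∀ θ : Fin M → ℝ, f θ = ∑ i, κ i * Real.cos (θ i)
      - ∑ i, ∑ k, Δ i k *
          (Real.sin (θ i) * Real.sin (θ k) + Real.cos (θ i) * Real.cos (θ k)))
    (G : Matrix (Fin M) (Fin M) ℝ)
    (hG : ∀ i k, G i k =
      if k = i then κ i / 2 - ∑ l ∈ Finset.univ.erase i, Δ i l else Δ i k)
    (θhat : Fin M → ℝ) (φhat : Fin M → ℂ)
    (hφhat : ∀ i, φhat i = Complex.exp (Complex.I * (θhat i : ℂ))) :
    (∀ θ : Fin M → ℝ, f θ ≤ f θhat) ↔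
      (∀ φ : Fin M → ℂ, (∀ i, ‖φ i‖ = 1) →
        (star (φhat - 1) ⬝ᵥ ((G.map Complex.ofReal) *ᵥ (φhat - 1))).re ≤
          (star (φ - 1) ⬝ᵥ ((G.map Complex.ofReal) *ᵥ (φ - 1))).re) :=
  vonMises_MAP_iff_mahalanobis_min_general M κ Δ hΔ hΔd f hf G hG θhat φhat hφhat
end

section
/- Let M₀ be an M×M Hermitian complex matrix, let G be an M×M real symmetric matrix, let σ² > 0, and let Q be the (M+1)×(M+1) Hermitian matrix with top-left block M₀ + σ² G, top-right column −σ² G 1_M, bottom-left row −σ² 1_M^T G, and bottom-right scalar σ² Σ_{i,k} G_{ik}. Suppose û ∈ ℂ^{M+1} satisfies |û_i| = 1 for all i and û^H Q û ≤ u^H Q u for every u ∈ ℂ^{M+1} with |u_i| = 1 for all i. Then φ̂ = (û_{M+1})^{-1} · (û_1, …, û_M) satisfies |φ̂_i| = 1 for all i and minimizes the objective J(φ) = (1/σ²) φ^H M₀ φ + (φ − 1_M)^H G (φ − 1_M) over all φ ∈ ℂ^M with |φ_i| = 1 for all i. -/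
/-!
Evaluated at the lift `u = (φ, 1)`, the homogenized form satisfies `uᴴ Q u = σ² J(φ)`, because
`Q = [[M₀, 0], [0, 0]] + σ² [I, -1]ᴴ G [I, -1]`. The form is also invariant under multiplying `u` by
a unit-modulus scalar, so `û = û_{M+1} • (φ̂, 1)` has the same value as `(φ̂, 1)`, and minimality of
`û` against `(φ, 1)` gives `σ² J(φ̂) ≤ σ² J(φ)`.
-/

open Matrix Complex Finset

section

variable {R : Type*} [CommRing R] [StarRing R] {n : ℕ}

theorem star_snoc_one_dotProduct_mulVec_snoc_one (Q : Matrix (Fin (n + 1)) (Fin (n + 1)) R)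
    (x : Fin n → R) :
    star (Fin.snoc x 1 : Fin (n + 1) → R) ⬝ᵥ (Q *ᵥ Fin.snoc x 1) =
      star x ⬝ᵥ (Q.submatrix Fin.castSucc Fin.castSucc *ᵥ x) +
        star x ⬝ᵥ (fun i ↦ Q i.castSucc (Fin.last n)) +
        (fun k ↦ Q (Fin.last n) k.castSucc) ⬝ᵥ x + Q (Fin.last n) (Fin.last n) := by
  simp only [dotProduct, mulVec, Fin.sum_univ_castSucc, Pi.star_apply, Fin.snoc_castSucc,
    Fin.snoc_last, star_one, mul_one, one_mul, mul_add, Finset.sum_add_distrib, submatrix_apply]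
  abel

theorem star_smul_dotProduct_mulVec_smul (Q : Matrix (Fin n) (Fin n) R) {c : R}
    (hc : star c * c = 1) (u : Fin n → R) :
    star (c • u) ⬝ᵥ (Q *ᵥ (c • u)) = star u ⬝ᵥ (Q *ᵥ u) := by
  rw [mulVec_smul, star_smul, smul_dotProduct, dotProduct_smul, smul_smul, hc, one_smul]

end

section

variable {n : ℕ}

/-- The matrix `Q` of eq. (14). -/
def homogenizedMatrix (A : Matrix (Fin n) (Fin n) ℂ) (G : Matrix (Fin n) (Fin n) ℝ) (σ2 : ℝ) :
    Matrix (Fin (n + 1)) (Fin (n + 1)) ℂ :=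
  of fun i k ↦
      if hi : (i : ℕ) < n then
        if hk : (k : ℕ) < n then
          A ⟨i, hi⟩ ⟨k, hk⟩ + (σ2 : ℂ) * (G ⟨i, hi⟩ ⟨k, hk⟩ : ℂ)
        else -(σ2 : ℂ) * ∑ l, (G ⟨i, hi⟩ l : ℂ)
      else
        if hk : (k : ℕ) < n then -(σ2 : ℂ) * ∑ l, (G l ⟨k, hk⟩ : ℂ)
        else (σ2 : ℂ) * ∑ p, ∑ q, (G p q : ℂ)

/-- The MAP objective `J` of eq. (12). -/
noncomputable def mapObjective (A : Matrix (Fin n) (Fin n) ℂ) (G : Matrix (Fin n) (Fin n) ℝ)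
    (σ2 : ℝ) (φ : Fin n → ℂ) : ℝ :=
  (1 / σ2) * (star φ ⬝ᵥ (A *ᵥ φ)).re + (star (φ - 1) ⬝ᵥ (G.map ofReal *ᵥ (φ - 1))).re

theorem star_snoc_one_dotProduct_homogenizedMatrix_mulVec (A : Matrix (Fin n) (Fin n) ℂ)
    (G : Matrix (Fin n) (Fin n) ℝ) (σ2 : ℝ) (φ : Fin n → ℂ) :
    star (Fin.snoc φ 1 : Fin (n + 1) → ℂ) ⬝ᵥ (homogenizedMatrix A G σ2 *ᵥ Fin.snoc φ 1) =
      star φ ⬝ᵥ (A *ᵥ φ) + σ2 * (star (φ - 1) ⬝ᵥ (G.map ofReal *ᵥ (φ - 1))) := by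
  set G' := G.map ofReal
  have hblock : (homogenizedMatrix A G σ2).submatrix Fin.castSucc Fin.castSucc =
      A + (σ2 : ℂ) • G' := by
    ext i k; simp [homogenizedMatrix, G']
  have hcol : (fun i ↦ homogenizedMatrix A G σ2 i.castSucc (Fin.last n)) =
      -(σ2 : ℂ) • (G' *ᵥ 1) := by
    ext i; simp [homogenizedMatrix, G', mulVec, dotProduct]
  have hrow : (fun k ↦ homogenizedMatrix A G σ2 (Fin.last n) k.castSucc) =
      -(σ2 : ℂ) • (1 ᵥ* G') := by
    ext k; simp [homogenizedMatrix, G', vecMul, dotProduct]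
  have hcorner : homogenizedMatrix A G σ2 (Fin.last n) (Fin.last n) = σ2 * (1 ⬝ᵥ (G' *ᵥ 1)) := by
    simp [homogenizedMatrix, G', mulVec, dotProduct]
  rw [star_snoc_one_dotProduct_mulVec_snoc_one, hblock, hcol, hrow, hcorner]
  simp only [add_mulVec, smul_mulVec, dotProduct_add, dotProduct_smul, smul_dotProduct, star_sub,
    star_one, sub_dotProduct, mulVec_sub, dotProduct_sub, ← dotProduct_mulVec, smul_eq_mul]
  ring

theorem re_star_snoc_one_dotProduct_homogenizedMatrix_mulVec (A : Matrix (Fin n) (Fin n) ℂ)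
    (G : Matrix (Fin n) (Fin n) ℝ) {σ2 : ℝ} (hσ2 : σ2 ≠ 0) (φ : Fin n → ℂ) :
    (star (Fin.snoc φ 1 : Fin (n + 1) → ℂ) ⬝ᵥ (homogenizedMatrix A G σ2 *ᵥ Fin.snoc φ 1)).re =
      σ2 * mapObjective A G σ2 φ := by
  rw [star_snoc_one_dotProduct_homogenizedMatrix_mulVec, mapObjective, add_re, re_ofReal_mul]
  field_simp

theorem homogenized_minimizer_gives_MAP_general (M : ℕ)
    (M₀ : Matrix (Fin M) (Fin M) ℂ)
    (G : Matrix (Fin M) (Fin M) ℝ)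
    (σ2 : ℝ) (hσ2 : 0 < σ2)
    (Q : Matrix (Fin (M + 1)) (Fin (M + 1)) ℂ)
    (hQ : ∀ i k : Fin (M + 1), Q i k =
      if hi : (i : ℕ) < M then
        if hk : (k : ℕ) < M then
          M₀ ⟨i, hi⟩ ⟨k, hk⟩ + (σ2 : ℂ) * (G ⟨i, hi⟩ ⟨k, hk⟩ : ℂ)
        else -(σ2 : ℂ) * ∑ l, (G ⟨i, hi⟩ l : ℂ)
      else
        if hk : (k : ℕ) < M then -(σ2 : ℂ) * ∑ l, (G l ⟨k, hk⟩ : ℂ)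
        else (σ2 : ℂ) * ∑ p, ∑ q, (G p q : ℂ))
    (uhat : Fin (M + 1) → ℂ) (huhat : ∀ i, ‖uhat i‖ = 1)
    (hmin : ∀ u : Fin (M + 1) → ℂ, (∀ i, ‖u i‖ = 1) →
      (star uhat ⬝ᵥ (Q *ᵥ uhat)).re ≤ (star u ⬝ᵥ (Q *ᵥ u)).re)
    (φhat : Fin M → ℂ)
    (hφhat : ∀ i : Fin M, φhat i = (uhat (Fin.last M))⁻¹ * uhat i.castSucc) :
    (∀ i, ‖φhat i‖ = 1) ∧
      ∀ φ : Fin M → ℂ, (∀ i, ‖φ i‖ = 1) →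
        (1 / σ2) * (star φhat ⬝ᵥ (M₀ *ᵥ φhat)).re +
            (star (φhat - 1) ⬝ᵥ ((G.map Complex.ofReal) *ᵥ (φhat - 1))).re ≤
          (1 / σ2) * (star φ ⬝ᵥ (M₀ *ᵥ φ)).re +
            (star (φ - 1) ⬝ᵥ ((G.map Complex.ofReal) *ᵥ (φ - 1))).re := by
  obtain rfl : Q = homogenizedMatrix M₀ G σ2 := Matrix.ext hQ
  set c := uhat (Fin.last M)
  have hc : ‖c‖ = 1 := huhat _
  have hc0 : c ≠ 0 := norm_ne_zero_iff.mp (by rw [hc]; exact one_ne_zero)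
  have huhat_eq : uhat = c • Fin.snoc φhat 1 := by
    funext i
    refine Fin.lastCases (by simp [c]) (fun j ↦ ?_) i
    simp [hφhat, mul_inv_cancel_left₀ hc0]
  refine ⟨fun i ↦ by simp [hφhat, hc, huhat], fun φ hφ ↦ ?_⟩
  have key := hmin (Fin.snoc φ 1) fun i ↦ Fin.lastCases (by simp) (fun j ↦ by simp [hφ]) i
  rw [huhat_eq, star_smul_dotProduct_mulVec_smul _ (by simp [RCLike.star_def, conj_mul', hc]),
    re_star_snoc_one_dotProduct_homogenizedMatrix_mulVec _ _ hσ2.ne',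
    re_star_snoc_one_dotProduct_homogenizedMatrix_mulVec _ _ hσ2.ne'] at key
  exact le_of_mul_le_mul_left key hσ2

/-- If `û` solves the homogenized `(M+1)`-dimensional program (13), i.e. minimizes
`uᴴ Q u` over unit-modulus vectors, then `φ̂ = û_{1:M} / û_{M+1}` is unit-modulus and
minimizes the MAP objective `J(φ) = (1/σ²) φᴴ M₀ φ + (φ − 1)ᴴ G (φ − 1)` of eq. (12)
over unit-modulus vectors `φ`. -/
theorem homogenized_minimizer_gives_MAP (M : ℕ)
    (M₀ : Matrix (Fin M) (Fin M) ℂ) (hM₀ : M₀.IsHermitian)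
    (G : Matrix (Fin M) (Fin M) ℝ) (hG : G.IsSymm)
    (σ2 : ℝ) (hσ2 : 0 < σ2)
    (Q : Matrix (Fin (M + 1)) (Fin (M + 1)) ℂ)
    (hQ : ∀ i k : Fin (M + 1), Q i k =
      if hi : (i : ℕ) < M then
        if hk : (k : ℕ) < M then
          M₀ ⟨i, hi⟩ ⟨k, hk⟩ + (σ2 : ℂ) * (G ⟨i, hi⟩ ⟨k, hk⟩ : ℂ)
        else -(σ2 : ℂ) * ∑ l, (G ⟨i, hi⟩ l : ℂ)
      else
        if hk : (k : ℕ) < M then -(σ2 : ℂ) * ∑ l, (G l ⟨k, hk⟩ : ℂ)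
        else (σ2 : ℂ) * ∑ p, ∑ q, (G p q : ℂ))
    (uhat : Fin (M + 1) → ℂ) (huhat : ∀ i, ‖uhat i‖ = 1)
    (hmin : ∀ u : Fin (M + 1) → ℂ, (∀ i, ‖u i‖ = 1) →
      (star uhat ⬝ᵥ (Q *ᵥ uhat)).re ≤ (star u ⬝ᵥ (Q *ᵥ u)).re)
    (φhat : Fin M → ℂ)
    (hφhat : ∀ i : Fin M, φhat i = (uhat (Fin.last M))⁻¹ * uhat i.castSucc) :
    (∀ i, ‖φhat i‖ = 1) ∧
      ∀ φ : Fin M → ℂ, (∀ i, ‖φ i‖ = 1) →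
        (1 / σ2) * (star φhat ⬝ᵥ (M₀ *ᵥ φhat)).re +
            (star (φhat - 1) ⬝ᵥ ((G.map Complex.ofReal) *ᵥ (φhat - 1))).re ≤
          (1 / σ2) * (star φ ⬝ᵥ (M₀ *ᵥ φ)).re +
            (star (φ - 1) ⬝ᵥ ((G.map Complex.ofReal) *ᵥ (φ - 1))).re :=
  homogenized_minimizer_gives_MAP_general M M₀ G σ2 hσ2 Q hQ uhat huhat hmin φhat hφhat
end
end
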